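/- Let P be the Markov kernel on (S, 𝓕) given by P(s, F) = ∫_F p(s,t) λ(dt) with p(s,t) = ∫_A m(s,t,a) τ(da), let Pⁿ denote its n-fold iterate, and for x ∈ K let xPⁿ(F) = ∫_S Pⁿ(s, F) x(ds). Suppose 𝐏 is a Markov kernel on the space of measures on (S, 𝓕) (with the evaluation σ-algebra) such that for every x ∈ K and every measurable set E of measures, 𝐏(x, E) = ∫_A 1_E(h(x,a)) ‖xM_a‖ τ(da). Then for every integer n ≥ 1, every x ∈ K and every F ∈ 𝓕, the barycenter of 𝐏ⁿ(x, ·) at F equals (xPⁿ)(F), i.e. ∫ z(F) 𝐏ⁿ(x, dz) = (xPⁿ)(F). -/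

import Mathlib

open MeasureTheory ProbabilityTheory
open scoped NNReal ENNReal Classical

/-!
The barycenter `b` is `Measure.join`. For `y ∈ K`, `𝐏(y, ·)` is the image of `‖yM_a‖ τ(da)`
under `a ↦ h(y, a)`, and `‖yM_a‖ h(y, a) = yM_a` whenever `‖yM_a‖ < ∞`, which holds for
`τ`-a.e. `a` because `∫ ‖yM_a‖ τ(da) = 1`. Hence `b(𝐏(y, ·)) = ∫ yM_a τ(da)`, which is `yP` by
Tonelli. The same a.e. argument shows that `h(y, a) ∈ K` for `𝐏(y, ·)`-almost every outcome, so
every iterate `𝐏ⁿ(x, ·)` is carried by `K`, where the one-step identity holds; the Giry monad laws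
then give `b(𝐏ⁿ⁺¹(x, ·)) = b(𝐏ⁿ(x, ·)) P`, and the theorem follows by induction.
-/

/-- The measure `xM_a`, `xM_a(F) = ∫_S ∫_F m(s,t,a) λ(dt) x(ds)`. -/
noncomputable def xMa {S A : Type*} [MeasurableSpace S] [MeasurableSpace A]
    (lam : Measure S) (m : S → S → A → ℝ≥0) (x : Measure S) (a : A) : Measure S :=
  x.bind fun s => lam.withDensity fun t => (m s t a : ℝ≥0∞)

/-- The map `h(x,a) = xM_a/‖xM_a‖` if `‖xM_a‖ > 0`, and `h(x,a) = x` otherwise. -/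
noncomputable def hmap {S A : Type*} [MeasurableSpace S] [MeasurableSpace A]
    (lam : Measure S) (m : S → S → A → ℝ≥0) (x : Measure S) (a : A) : Measure S :=
  if 0 < xMa lam m x a Set.univ then (xMa lam m x a Set.univ)⁻¹ • xMa lam m x a else x

/-- The Markov kernel `P(s,F) = ∫_F p(s,t) λ(dt)` with `p(s,t) = ∫_A m(s,t,a) τ(da)`. -/
noncomputable def Pone {S A : Type*} [MeasurableSpace S] [MeasurableSpace A]
    (lam : Measure S) (τ : Measure A) (m : S → S → A → ℝ≥0) (s : S) : Measure S :=
  lam.withDensity fun t => ∫⁻ a, (m s t a : ℝ≥0∞) ∂τ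

/-- Iterates of `P`: `Piter n s = P^{n+1}(s, ·)`. -/
noncomputable def Piter {S A : Type*} [MeasurableSpace S] [MeasurableSpace A]
    (lam : Measure S) (τ : Measure A) (m : S → S → A → ℝ≥0) : ℕ → S → Measure S
  | 0 => Pone lam τ m
  | n + 1 => fun s => (Piter lam τ m n s).bind (Pone lam τ m)

/-- Iterates of the filter kernel `𝐏`: `BPiter BP n x = 𝐏^{n+1}(x, ·)`. -/
noncomputable def BPiter {S : Type*} [MeasurableSpace S]
    (BP : Kernel (Measure S) (Measure S)) : ℕ → Measure S → Measure (Measure S)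
  | 0 => fun x => BP x
  | n + 1 => fun x => (BPiter BP n x).bind fun z => BP z

namespace MeasureTheory.Measure

variable {α β : Type*} [MeasurableSpace α] [MeasurableSpace β]

/-- Only measurable sets are tested, so `K` need not be measurable: the absolutely continuous
probability measures are not known to form a measurable set for the evaluation σ-algebra. -/
def ConcentratedOn (μ : Measure α) (K : Set α) : Prop :=
  ∀ D, MeasurableSet D → Disjoint D K → μ D = 0

variable {μ : Measure α} {K : Set α}

theorem ConcentratedOn.ae_eq {γ : Type*} [MeasurableSpace γ] [MeasurableEq γ]
    (hμ : μ.ConcentratedOn K) {f g : α → γ} (hf : Measurable f) (hg : Measurable g)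
    (hfg : ∀ y ∈ K, f y = g y) : f =ᵐ[μ] g :=
  ae_iff.2 <| hμ _ (measurableSet_eq_fun hf hg).compl <|
    Set.disjoint_left.2 fun y hy hyK => hy (hfg y hyK)

theorem ConcentratedOn.bind_congr (hμ : μ.ConcentratedOn K) {κ η : α → Measure β}
    (hκ : Measurable κ) (hη : Measurable η) (h : ∀ y ∈ K, κ y = η y) :
    μ.bind κ = μ.bind η := by
  ext E hE
  rw [bind_apply hE hκ.aemeasurable, bind_apply hE hη.aemeasurable]
  exact lintegral_congr_ae <| hμ.ae_eq ((measurable_coe hE).comp hκ)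
    ((measurable_coe hE).comp hη) fun y hy => by rw [h y hy]

theorem ConcentratedOn.bind (hμ : μ.ConcentratedOn K) {L : Set β} {κ : α → Measure β}
    (hκ : Measurable κ) (h : ∀ y ∈ K, (κ y).ConcentratedOn L) :
    (μ.bind κ).ConcentratedOn L := by
  intro D hD hDL
  have hnull : (fun y => κ y D) =ᵐ[μ] 0 :=
    hμ.ae_eq ((measurable_coe hD).comp hκ) measurable_const fun y hy => h y hy D hD hDL
  rw [bind_apply hD hκ.aemeasurable, lintegral_congr_ae hnull, Pi.zero_def, lintegral_zero]

theorem measurable_smul_measure {c : α → ℝ≥0∞} {κ : α → Measure β} (hc : Measurable c)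
    (hκ : Measurable κ) : Measurable fun a => c a • κ a := by
  refine measurable_of_measurable_coe _ fun G hG => ?_
  simp only [smul_apply, smul_eq_mul]
  exact hc.mul ((measurable_coe hG).comp hκ)

theorem measurable_withDensity_of_uncurry {ν : Measure β} [SFinite ν] {f : α → β → ℝ≥0∞}
    (hf : Measurable (Function.uncurry f)) : Measurable fun a => ν.withDensity (f a) := by
  have h : ⇑(Kernel.withDensity (Kernel.const α ν) f) = fun a => ν.withDensity (f a) :=
    funext fun a => by rw [Kernel.withDensity_apply _ hf, Kernel.const_apply]
  exact h ▸ Kernel.measurable _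

theorem measurable_bind_of_uncurry {γ : Type*} [MeasurableSpace γ] (ν : Measure β) [SFinite ν]
    {κ : α → β → Measure γ} (hκ : Measurable (Function.uncurry κ)) :
    Measurable fun a => ν.bind (κ a) := by
  refine measurable_of_measurable_coe _ fun G hG => ?_
  have h : ∀ a, ν.bind (κ a) G = ∫⁻ b, κ a b G ∂ν :=
    fun a => bind_apply hG (hκ.comp measurable_prodMk_left).aemeasurable
  simp only [h]
  exact ((measurable_coe hG).comp hκ).lintegral_prod_right'

theorem bind_absolutelyContinuous {ν : Measure β} {κ : α → Measure β} (hκ : Measurable κ)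
    (h : ∀ a, κ a ≪ ν) : μ.bind κ ≪ ν :=
  AbsolutelyContinuous.mk fun G hG hG0 => by
    simp only [bind_apply hG hκ.aemeasurable, h _ hG0, lintegral_zero]

end MeasureTheory.Measure

open Measure

section Filter

variable {S A : Type*} [MeasurableSpace S] [MeasurableSpace A]
  {lam : Measure S} {τ : Measure A} {m : S → S → A → ℝ≥0}

def acProbMeasures (lam : Measure S) : Set (Measure S) :=
  {z | IsProbabilityMeasure z ∧ z ≪ lam}

def IsFilterKernel (lam : Measure S) (τ : Measure A) (m : S → S → A → ℝ≥0)
    (BP : Kernel (Measure S) (Measure S)) : Prop :=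
  ∀ x : Measure S, IsProbabilityMeasure x → x ≪ lam → ∀ E : Set (Measure S), MeasurableSet E →
    BP x E = ∫⁻ a, (if hmap lam m x a ∈ E then xMa lam m x a Set.univ else 0) ∂τ

theorem measurable_density_comp (hm : Measurable fun p : S × S × A => m p.1 p.2.1 p.2.2)
    {γ : Type*} [MeasurableSpace γ] {f g : γ → S} {h : γ → A}
    (hf : Measurable f) (hg : Measurable g) (hh : Measurable h) :
    Measurable fun c => (m (f c) (g c) (h c) : ℝ≥0∞) :=
  (hm.comp (hf.prodMk (hg.prodMk hh))).coe_nnreal_ennreal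

theorem measurable_Pone [SFinite lam] [SFinite τ]
    (hm : Measurable fun p : S × S × A => m p.1 p.2.1 p.2.2) : Measurable (Pone lam τ m) :=
  measurable_withDensity_of_uncurry (f := fun s t => ∫⁻ a, (m s t a : ℝ≥0∞) ∂τ) <|
    Measurable.lintegral_prod_right' (f := fun q : (S × S) × A => (m q.1.1 q.1.2 q.2 : ℝ≥0∞)) <|
      measurable_density_comp hm (by fun_prop) (by fun_prop) (by fun_prop)

theorem measurable_Piter [SFinite lam] [SFinite τ]
    (hm : Measurable fun p : S × S × A => m p.1 p.2.1 p.2.2) (n : ℕ) :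
    Measurable (Piter lam τ m n) := by
  induction n with
  | zero => exact measurable_Pone hm
  | succ n ih => exact (measurable_bind' (measurable_Pone hm)).comp ih

theorem Pone_apply_univ (hnorm : ∀ s : S, ∫⁻ t, ∫⁻ a, (m s t a : ℝ≥0∞) ∂τ ∂lam = 1) (s : S) :
    Pone lam τ m s Set.univ = 1 := by
  rw [Pone, withDensity_apply _ MeasurableSet.univ, restrict_univ, hnorm]

theorem measurable_withDensity_density [SFinite lam]
    (hm : Measurable fun p : S × S × A => m p.1 p.2.1 p.2.2) (a : A) :
    Measurable fun s => lam.withDensity fun t => (m s t a : ℝ≥0∞) :=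
  measurable_withDensity_of_uncurry (f := fun s t => (m s t a : ℝ≥0∞)) <|
    measurable_density_comp hm (by fun_prop) (by fun_prop) (by fun_prop)

theorem xMa_apply [SFinite lam] (hm : Measurable fun p : S × S × A => m p.1 p.2.1 p.2.2)
    (y : Measure S) (a : A) {G : Set S} (hG : MeasurableSet G) :
    xMa lam m y a G = ∫⁻ s, ∫⁻ t in G, (m s t a : ℝ≥0∞) ∂lam ∂y := by
  rw [xMa, bind_apply hG (measurable_withDensity_density hm a).aemeasurable]
  exact lintegral_congr fun s => withDensity_apply _ hG

theorem xMa_absolutelyContinuous [SFinite lam]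
    (hm : Measurable fun p : S × S × A => m p.1 p.2.1 p.2.2) (y : Measure S) (a : A) :
    xMa lam m y a ≪ lam :=
  bind_absolutelyContinuous (measurable_withDensity_density hm a) fun _ =>
    withDensity_absolutelyContinuous _ _

theorem measurable_xMa [SFinite lam] (hm : Measurable fun p : S × S × A => m p.1 p.2.1 p.2.2)
    (y : Measure S) [SFinite y] : Measurable (xMa lam m y) :=
  measurable_bind_of_uncurry y (κ := fun a s => lam.withDensity fun t => (m s t a : ℝ≥0∞)) <|
    measurable_withDensity_of_uncurry (f := fun (p : A × S) t => (m p.2 t p.1 : ℝ≥0∞)) <|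
      measurable_density_comp hm (f := fun q : (A × S) × S => q.1.2) (g := Prod.snd)
        (h := fun q => q.1.1) (by fun_prop) (by fun_prop) (by fun_prop)

theorem measurable_hmap [SFinite lam] (hm : Measurable fun p : S × S × A => m p.1 p.2.1 p.2.2)
    (y : Measure S) [SFinite y] : Measurable (hmap lam m y) := by
  have hmass : Measurable fun a => xMa lam m y a Set.univ :=
    (measurable_coe MeasurableSet.univ).comp (measurable_xMa hm y)
  exact Measurable.ite (hmass measurableSet_Ioi)
    (measurable_smul_measure hmass.inv (measurable_xMa hm y)) measurable_const

theorem lintegral_xMa_apply [SFinite lam] [SFinite τ]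
    (hm : Measurable fun p : S × S × A => m p.1 p.2.1 p.2.2) (y : Measure S) [SFinite y]
    {F : Set S} (hF : MeasurableSet F) :
    ∫⁻ a, xMa lam m y a F ∂τ = y.bind (Pone lam τ m) F := by
  rw [bind_apply hF (measurable_Pone hm).aemeasurable]
  simp_rw [xMa_apply hm y _ hF]
  rw [lintegral_lintegral_swap (Measurable.lintegral_prod_right'
    (f := fun q : (A × S) × S => (m q.1.2 q.2 q.1.1 : ℝ≥0∞))
    (measurable_density_comp hm (by fun_prop) (by fun_prop) (by fun_prop))).aemeasurable]
  refine lintegral_congr fun s => ?_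
  rw [Pone, withDensity_apply _ hF, lintegral_lintegral_swap
    (measurable_density_comp hm (f := fun _ : A × S => s) (g := Prod.snd) (h := Prod.fst)
      (by fun_prop) (by fun_prop) (by fun_prop)).aemeasurable]

theorem ae_xMa_univ_ne_top [SFinite lam] [SFinite τ]
    (hm : Measurable fun p : S × S × A => m p.1 p.2.1 p.2.2)
    (hnorm : ∀ s : S, ∫⁻ t, ∫⁻ a, (m s t a : ℝ≥0∞) ∂τ ∂lam = 1)
    (y : Measure S) [IsFiniteMeasure y] : ∀ᵐ a ∂τ, xMa lam m y a Set.univ ≠ ∞ := by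
  have hmass : ∫⁻ a, xMa lam m y a Set.univ ∂τ = y Set.univ := by
    rw [lintegral_xMa_apply hm y MeasurableSet.univ,
      bind_apply MeasurableSet.univ (measurable_Pone hm).aemeasurable]
    simp only [Pone_apply_univ hnorm, lintegral_one]
  filter_upwards [ae_lt_top ((measurable_coe MeasurableSet.univ).comp (measurable_xMa hm y))
    (hmass ▸ measure_ne_top y _)] with a ha
  exact ha.ne

theorem xMa_univ_smul_hmap {y : Measure S} {a : A} (h : xMa lam m y a Set.univ ≠ ∞) :
    xMa lam m y a Set.univ • hmap lam m y a = xMa lam m y a := by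
  rw [hmap]
  split_ifs with hpos
  · rw [smul_smul, ENNReal.mul_inv_cancel hpos.ne' h, one_smul]
  · rw [not_lt, nonpos_iff_eq_zero] at hpos
    rw [hpos, zero_smul, eq_comm, ← measure_univ_eq_zero, hpos]

theorem hmap_mem_acProbMeasures [SFinite lam]
    (hm : Measurable fun p : S × S × A => m p.1 p.2.1 p.2.2) {y : Measure S}
    (hy : y ∈ acProbMeasures lam) {a : A} (h : xMa lam m y a Set.univ ≠ ∞) :
    hmap lam m y a ∈ acProbMeasures lam := by
  rw [hmap]
  split_ifs with hpos
  · exact ⟨⟨by rw [Measure.smul_apply, smul_eq_mul, ENNReal.inv_mul_cancel hpos.ne' h]⟩,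
      (xMa_absolutelyContinuous hm y a).smul_left _⟩
  · exact hy

namespace IsFilterKernel

variable {BP : Kernel (Measure S) (Measure S)} [SFinite lam]

theorem concentratedOn [SFinite τ] (hBP : IsFilterKernel lam τ m BP)
    (hm : Measurable fun p : S × S × A => m p.1 p.2.1 p.2.2)
    (hnorm : ∀ s : S, ∫⁻ t, ∫⁻ a, (m s t a : ℝ≥0∞) ∂τ ∂lam = 1)
    {y : Measure S} (hy : y ∈ acProbMeasures lam) :
    (BP y).ConcentratedOn (acProbMeasures lam) := by
  intro D hD hDK
  have := hy.1
  rw [hBP y hy.1 hy.2 D hD]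
  refine (lintegral_congr_ae ?_).trans lintegral_zero
  filter_upwards [ae_xMa_univ_ne_top hm hnorm y] with a ha
  rw [if_neg (Set.disjoint_right.1 hDK (hmap_mem_acProbMeasures hm hy ha))]

theorem eq_map (hBP : IsFilterKernel lam τ m BP)
    (hm : Measurable fun p : S × S × A => m p.1 p.2.1 p.2.2) {y : Measure S}
    (hy : y ∈ acProbMeasures lam) :
    BP y = (τ.withDensity fun a => xMa lam m y a Set.univ).map (hmap lam m y) := by
  have := hy.1
  have hh : Measurable (hmap lam m y) := measurable_hmap hm y
  ext E hE
  have hpre := hh hE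
  rw [hBP y hy.1 hy.2 E hE, map_apply hh hE, withDensity_apply _ hpre,
    ← lintegral_indicator hpre]
  refine lintegral_congr fun a => ?_
  by_cases h : hmap lam m y a ∈ E <;> simp [h]

theorem join_eq_bind [SFinite τ] (hBP : IsFilterKernel lam τ m BP)
    (hm : Measurable fun p : S × S × A => m p.1 p.2.1 p.2.2)
    (hnorm : ∀ s : S, ∫⁻ t, ∫⁻ a, (m s t a : ℝ≥0∞) ∂τ ∂lam = 1)
    {y : Measure S} (hy : y ∈ acProbMeasures lam) :
    (BP y).join = y.bind (Pone lam τ m) := by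
  have := hy.1
  have hh : Measurable (hmap lam m y) := measurable_hmap hm y
  have hmass : Measurable fun a => xMa lam m y a Set.univ :=
    (measurable_coe MeasurableSet.univ).comp (measurable_xMa hm y)
  ext F hF
  rw [join_apply hF, hBP.eq_map hm hy, lintegral_map (measurable_coe hF) hh,
    lintegral_withDensity_eq_lintegral_mul _ hmass (g := fun a => hmap lam m y a F)
      ((measurable_coe hF).comp hh),
    ← lintegral_xMa_apply hm y hF]
  refine lintegral_congr_ae ?_
  filter_upwards [ae_xMa_univ_ne_top hm hnorm y] with a ha
  simpa using congrArg (· F) (xMa_univ_smul_hmap ha)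

theorem concentratedOn_BPiter [SFinite τ] (hBP : IsFilterKernel lam τ m BP)
    (hm : Measurable fun p : S × S × A => m p.1 p.2.1 p.2.2)
    (hnorm : ∀ s : S, ∫⁻ t, ∫⁻ a, (m s t a : ℝ≥0∞) ∂τ ∂lam = 1)
    {x : Measure S} (hx : x ∈ acProbMeasures lam) (n : ℕ) :
    (BPiter BP n x).ConcentratedOn (acProbMeasures lam) := by
  induction n with
  | zero => exact hBP.concentratedOn hm hnorm hx
  | succ n ih => exact ih.bind BP.measurable fun y hy => hBP.concentratedOn hm hnorm hy

theorem join_BPiter [SFinite τ] (hBP : IsFilterKernel lam τ m BP)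
    (hm : Measurable fun p : S × S × A => m p.1 p.2.1 p.2.2)
    (hnorm : ∀ s : S, ∫⁻ t, ∫⁻ a, (m s t a : ℝ≥0∞) ∂τ ∂lam = 1)
    {x : Measure S} (hx : x ∈ acProbMeasures lam) (n : ℕ) :
    (BPiter BP n x).join = x.bind (Piter lam τ m n) := by
  induction n with
  | zero => exact hBP.join_eq_bind hm hnorm hx
  | succ n ih =>
    have hP : Measurable (Pone lam τ m) := measurable_Pone hm
    calc (BPiter BP (n + 1) x).join = (BPiter BP n x).bind fun y => (BP y).join := by
          simp only [BPiter, Measure.join_eq_bind]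
          exact bind_bind BP.measurable.aemeasurable measurable_id.aemeasurable
      _ = (BPiter BP n x).bind fun y => y.bind (Pone lam τ m) :=
          (hBP.concentratedOn_BPiter hm hnorm hx n).bind_congr
            (measurable_join.comp BP.measurable) (measurable_bind' hP)
            fun y hy => hBP.join_eq_bind hm hnorm hy
      _ = (x.bind (Piter lam τ m n)).bind (Pone lam τ m) := by
          rw [← ih, Measure.join_eq_bind, bind_bind measurable_id.aemeasurable hP.aemeasurable]
          rfl
      _ = x.bind (Piter lam τ m (n + 1)) := by
          rw [bind_bind (measurable_Piter hm n).aemeasurable hP.aemeasurable]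
          rfl

end IsFilterKernel

end Filter

theorem stmt_7_general {S A : Type*}
    [MeasurableSpace S]
    [MeasurableSpace A]
    (lam : Measure S) [SigmaFinite lam] (τ : Measure A) [SigmaFinite τ]
    (m : S → S → A → ℝ≥0)
    (hm : Measurable fun p : S × S × A => m p.1 p.2.1 p.2.2)
    (hnorm : ∀ s : S, ∫⁻ t, ∫⁻ a, (m s t a : ℝ≥0∞) ∂τ ∂lam = 1)
    (BP : Kernel (Measure S) (Measure S))
    (hBP : ∀ x : Measure S, IsProbabilityMeasure x → x ≪ lam →
      ∀ E : Set (Measure S), MeasurableSet E →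
        BP x E = ∫⁻ a, (if hmap lam m x a ∈ E then xMa lam m x a Set.univ else 0) ∂τ)
    (n : ℕ)
    (x : Measure S) (hx : IsProbabilityMeasure x) (hxl : x ≪ lam)
    (F : Set S) (hF : MeasurableSet F) :
    ∫⁻ z, z F ∂(BPiter BP (n - 1) x) = (x.bind (Piter lam τ m (n - 1))) F := by
  rw [← join_apply hF, IsFilterKernel.join_BPiter hBP hm hnorm ⟨hx, hxl⟩]

/-- The barycenter of `𝐏ⁿ(x, ·)` equals `xPⁿ`:
`∫ z(F) 𝐏ⁿ(x, dz) = (xPⁿ)(F)` for all `n ≥ 1`, `x ∈ K` and measurable `F`. -/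
theorem stmt_7 {S A : Type*}
    [MetricSpace S] [CompleteSpace S] [TopologicalSpace.SeparableSpace S]
    [MeasurableSpace S] [BorelSpace S]
    [MetricSpace A] [CompleteSpace A] [TopologicalSpace.SeparableSpace A]
    [MeasurableSpace A] [BorelSpace A]
    (lam : Measure S) [SigmaFinite lam] (τ : Measure A) [SigmaFinite τ]
    (m : S → S → A → ℝ≥0)
    (hm : Measurable fun p : S × S × A => m p.1 p.2.1 p.2.2)
    (hnorm : ∀ s : S, ∫⁻ t, ∫⁻ a, (m s t a : ℝ≥0∞) ∂τ ∂lam = 1)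
    (BP : Kernel (Measure S) (Measure S)) [IsMarkovKernel BP]
    (hBP : ∀ x : Measure S, IsProbabilityMeasure x → x ≪ lam →
      ∀ E : Set (Measure S), MeasurableSet E →
        BP x E = ∫⁻ a, (if hmap lam m x a ∈ E then xMa lam m x a Set.univ else 0) ∂τ)
    (n : ℕ) (hn : 1 ≤ n)
    (x : Measure S) (hx : IsProbabilityMeasure x) (hxl : x ≪ lam)
    (F : Set S) (hF : MeasurableSet F) :
    ∫⁻ z, z F ∂(BPiter BP (n - 1) x) = (x.bind (Piter lam τ m (n - 1))) F :=
  stmt_7_general lam τ m hm hnorm BP hBP n x hx hxl F hF
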